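/- In H(ℤ) with the standard generating set, for any integers x,y ≥ 0 and any z > 0, the word length satisfies |(x,y,z-1)| ≤ |(x,y,z)|, where heights z are taken in ℤ + ε(x,y) with ε(x,y)=1/2 if x,y are both odd and 0 otherwise. That is, word length is nondecreasing in the height coordinate above 0. -/

import Mathlib

/-- Heisenberg multiplication in exponential coordinates. -/
noncomputable def Hmul (a b : ℝ × ℝ × ℝ) : ℝ × ℝ × ℝ :=
  (a.1 + b.1, a.2.1 + b.2.1, a.2.2 + b.2.2 + (a.1 * b.2.1 - a.2.1 * b.1) / 2)

/-- The standard (symmetric) generating set of H(ℤ). -/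
def stdGen : Set (ℝ × ℝ × ℝ) :=
  {(1, 0, 0), (-1, 0, 0), (0, 1, 0), (0, -1, 0)}

/-- Word length with respect to the standard generators. -/
noncomputable def wordLength (p : ℝ × ℝ × ℝ) : ℕ :=
  sInf {n | ∃ l : List (ℝ × ℝ × ℝ),
    l.length = n ∧ (∀ a ∈ l, a ∈ stdGen) ∧ l.foldl Hmul (0, 0, 0) = p}

/-!
Replacing an adjacent pair `a b` in a word by `b a` keeps the `x`- and `y`-coordinates of the
endpoint and lowers its height by `a.1 * b.2.1 - a.2.1 * b.1 ∈ {-1, 0, 1}`, while reversing a word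
negates its height. Reversal is a composite of adjacent swaps, so on the way from a geodesic word
for `(x, y, z)` to its reverse the height walks in unit steps from `z` down to `-z ≤ z - 1`
(as `z ∈ ½ℤ` is positive) and passes through `z - 1`, giving a word of the same length for
`(x, y, z - 1)`. If `(x, y, z)` is unreachable, so is `(x, y, z - 1)` (append the commutator word),
and both lengths are the junk value `sInf ∅ = 0`.
-/

open Relation

noncomputable def evalWord (l : List (ℝ × ℝ × ℝ)) : ℝ × ℝ × ℝ := l.foldl Hmul (0, 0, 0)

theorem Hmul_assoc (a b c : ℝ × ℝ × ℝ) : Hmul (Hmul a b) c = Hmul a (Hmul b c) := by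
  simp only [Hmul, Prod.mk.injEq]
  exact ⟨by ring, by ring, by ring⟩

theorem zero_Hmul (a : ℝ × ℝ × ℝ) : Hmul (0, 0, 0) a = a := by
  simp [Hmul]

theorem Hmul_zero (a : ℝ × ℝ × ℝ) : Hmul a (0, 0, 0) = a := by
  simp [Hmul]

theorem foldl_Hmul (l : List (ℝ × ℝ × ℝ)) (p : ℝ × ℝ × ℝ) :
    l.foldl Hmul p = Hmul p (evalWord l) := by
  induction l generalizing p with
  | nil => exact (Hmul_zero p).symm
  | cons a l ih =>
    rw [List.foldl_cons, ih, Hmul_assoc]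
    show _ = Hmul p (List.foldl Hmul (Hmul (0, 0, 0) a) l)
    rw [zero_Hmul, ih]

@[simp]
theorem evalWord_nil : evalWord [] = (0, 0, 0) := rfl

theorem evalWord_cons (a : ℝ × ℝ × ℝ) (l : List (ℝ × ℝ × ℝ)) :
    evalWord (a :: l) = Hmul a (evalWord l) := by
  rw [evalWord, List.foldl_cons, zero_Hmul, foldl_Hmul]

theorem evalWord_append (l₁ l₂ : List (ℝ × ℝ × ℝ)) :
    evalWord (l₁ ++ l₂) = Hmul (evalWord l₁) (evalWord l₂) := by
  rw [evalWord, List.foldl_append, foldl_Hmul]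
  rfl

theorem evalWord_fst (l : List (ℝ × ℝ × ℝ)) : (evalWord l).1 = (l.map Prod.fst).sum := by
  induction l with
  | nil => simp
  | cons a l ih => simp [evalWord_cons, Hmul, ih]

theorem evalWord_snd_fst (l : List (ℝ × ℝ × ℝ)) :
    (evalWord l).2.1 = (l.map fun a => a.2.1).sum := by
  induction l with
  | nil => simp
  | cons a l ih => simp [evalWord_cons, Hmul, ih]

theorem List.Perm.evalWord_fst {l₁ l₂ : List (ℝ × ℝ × ℝ)} (h : l₁.Perm l₂) :
    (evalWord l₁).1 = (evalWord l₂).1 := by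
  rw [_root_.evalWord_fst, _root_.evalWord_fst, (h.map _).sum_eq]

theorem List.Perm.evalWord_snd_fst {l₁ l₂ : List (ℝ × ℝ × ℝ)} (h : l₁.Perm l₂) :
    (evalWord l₁).2.1 = (evalWord l₂).2.1 := by
  rw [_root_.evalWord_snd_fst, _root_.evalWord_snd_fst, (h.map _).sum_eq]

theorem evalWord_swap_snd_snd (u v : List (ℝ × ℝ × ℝ)) (a b : ℝ × ℝ × ℝ) :
    (evalWord (u ++ b :: a :: v)).2.2
      = (evalWord (u ++ a :: b :: v)).2.2 - (a.1 * b.2.1 - a.2.1 * b.1) := by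
  simp only [evalWord_append, evalWord_cons, Hmul]
  ring

theorem evalWord_reverse_snd_snd {l : List (ℝ × ℝ × ℝ)} (hl : ∀ a ∈ l, a.2.2 = 0) :
    (evalWord l.reverse).2.2 = -(evalWord l).2.2 := by
  induction l with
  | nil => simp
  | cons a l ih =>
    have hrev := List.reverse_perm l
    rw [List.reverse_cons, evalWord_append, evalWord_cons, evalWord_cons, evalWord_nil,
      Hmul_zero]
    simp only [Hmul, ih fun b hb => hl b (List.mem_cons_of_mem a hb), hrev.evalWord_fst,
      hrev.evalWord_snd_fst, hl a List.mem_cons_self]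
    ring

theorem stdGen_snd_snd {a : ℝ × ℝ × ℝ} (ha : a ∈ stdGen) : a.2.2 = 0 := by
  simp only [stdGen, Set.mem_insert_iff, Set.mem_singleton_iff] at ha
  rcases ha with rfl | rfl | rfl | rfl <;> rfl

theorem stdGen_cross_cases {a b : ℝ × ℝ × ℝ} (ha : a ∈ stdGen) (hb : b ∈ stdGen) :
    a.1 * b.2.1 - a.2.1 * b.1 = 1 ∨ a.1 * b.2.1 - a.2.1 * b.1 = 0 ∨
      a.1 * b.2.1 - a.2.1 * b.1 = -1 := by
  simp only [stdGen, Set.mem_insert_iff, Set.mem_singleton_iff] at ha hb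
  rcases ha with rfl | rfl | rfl | rfl <;> rcases hb with rfl | rfl | rfl | rfl <;> norm_num

def AdjSwap {α : Type*} (S : Set α) (l l' : List α) : Prop :=
  ∃ u v, ∃ a ∈ S, ∃ b ∈ S, l = u ++ a :: b :: v ∧ l' = u ++ b :: a :: v

section AdjSwap

variable {α : Type*} {S : Set α} {l l' : List α}

theorem AdjSwap.perm (h : AdjSwap S l l') : l.Perm l' := by
  obtain ⟨u, v, a, -, b, -, rfl, rfl⟩ := h
  exact (List.Perm.swap b a v).append_left u

theorem AdjSwap.cons (x : α) (h : AdjSwap S l l') : AdjSwap S (x :: l) (x :: l') := by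
  obtain ⟨u, v, a, ha, b, hb, rfl, rfl⟩ := h
  exact ⟨x :: u, v, a, ha, b, hb, rfl, rfl⟩

theorem List.Perm.reflTransGen_adjSwap (h : l.Perm l') (hl : ∀ a ∈ l, a ∈ S) :
    ReflTransGen (AdjSwap S) l l' := by
  induction h with
  | nil => exact .refl
  | cons x _ ih =>
    exact ReflTransGen.lift (x :: ·) (fun _ _ => AdjSwap.cons x) _ _
      (ih fun a ha => hl a (List.mem_cons_of_mem x ha))
  | swap x y l => exact .single ⟨[], l, y, hl y (by simp), x, hl x (by simp), rfl, rfl⟩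
  | trans h₁₂ _ ih₁ ih₂ => exact (ih₁ hl).trans (ih₂ fun a ha => hl a (h₁₂.mem_iff.mpr ha))

theorem List.perm_of_reflTransGen_adjSwap (h : ReflTransGen (AdjSwap S) l l') : l.Perm l' := by
  induction h with
  | refl => exact .refl l
  | tail _ hstep ih => exact ih.trans hstep.perm

end AdjSwap

theorem Relation.ReflTransGen.exists_eq_sub_natCast {α R : Type*} [CommRing R] [LinearOrder R]
    [IsStrictOrderedRing R] {r : α → α → Prop} {f : α → R}
    (hr : ∀ a b, r a b → f b = f a - 1 ∨ f b = f a ∨ f b = f a + 1) {a b : α}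
    (hab : ReflTransGen r a b) (n : ℕ) (hn : f b ≤ f a - n) :
    ∃ c, ReflTransGen r a c ∧ f c = f a - n := by
  induction hab using ReflTransGen.head_induction_on generalizing n with
  | refl => exact ⟨b, .refl, by linarith [(Nat.cast_nonneg n : (0 : R) ≤ n)]⟩
  | @head a a' hstep _ ih =>
    cases n with
    | zero => exact ⟨a, .refl, by simp⟩
    | succ k =>
      obtain ⟨n', hn'⟩ : ∃ n' : ℕ, f a' - n' = f a - (k + 1 : ℕ) := by
        rcases hr a a' hstep with h | h | h
        exacts [⟨k, by rw [h]; push_cast; ring⟩, ⟨k + 1, by rw [h]⟩,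
          ⟨k + 2, by rw [h]; push_cast; ring⟩]
      obtain ⟨c, hc, hfc⟩ := ih n' (hn'.symm ▸ hn)
      exact ⟨c, hc.head hstep, hfc.trans hn'⟩

theorem AdjSwap.evalWord_snd_snd {l l' : List (ℝ × ℝ × ℝ)} (h : AdjSwap stdGen l l') :
    (evalWord l').2.2 = (evalWord l).2.2 - 1 ∨ (evalWord l').2.2 = (evalWord l).2.2 ∨
      (evalWord l').2.2 = (evalWord l).2.2 + 1 := by
  obtain ⟨u, v, a, ha, b, hb, rfl, rfl⟩ := h
  rw [evalWord_swap_snd_snd]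
  rcases stdGen_cross_cases ha hb with h | h | h <;> rw [h] <;> norm_num

theorem exists_perm_evalWord_eq_height_sub_one {l : List (ℝ × ℝ × ℝ)}
    (hl : ∀ a ∈ l, a ∈ stdGen) {x y z : ℝ} (hev : evalWord l = (x, y, z)) (hz : 1 / 2 ≤ z) :
    ∃ l', l'.Perm l ∧ evalWord l' = (x, y, z - 1) := by
  have hrev : (evalWord l.reverse).2.2 ≤ (evalWord l).2.2 - (1 : ℕ) := by
    rw [evalWord_reverse_snd_snd fun a ha => stdGen_snd_snd (hl a ha), hev]
    push_cast
    linarith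
  obtain ⟨l', hl', hheight⟩ :=
    ((List.reverse_perm l).symm.reflTransGen_adjSwap hl).exists_eq_sub_natCast
      (f := fun l => (evalWord l).2.2) (fun _ _ => AdjSwap.evalWord_snd_snd) 1 hrev
  have hperm := (List.perm_of_reflTransGen_adjSwap hl').symm
  refine ⟨l', hperm, Prod.ext ?_ (Prod.ext ?_ ?_)⟩
  · rw [hperm.evalWord_fst, hev]
  · rw [hperm.evalWord_snd_fst, hev]
  · simpa [hev] using hheight

def Reachable (p : ℝ × ℝ × ℝ) : Prop :=
  ∃ l, (∀ a ∈ l, a ∈ stdGen) ∧ evalWord l = p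

theorem Reachable.height_add_one {x y z : ℝ} (h : Reachable (x, y, z)) :
    Reachable (x, y, z + 1) := by
  obtain ⟨l, hl, hev⟩ := h
  refine ⟨l ++ [(1, 0, 0), (0, 1, 0), (-1, 0, 0), (0, -1, 0)], ?_, ?_⟩
  · intro a ha
    rcases List.mem_append.mp ha with ha | ha
    · exact hl a ha
    · simp only [List.mem_cons, List.not_mem_nil, or_false] at ha
      rcases ha with rfl | rfl | rfl | rfl <;> simp [stdGen]
  · rw [evalWord_append, hev]
    norm_num [evalWord_cons, Hmul]

theorem wordLength_le_length {l : List (ℝ × ℝ × ℝ)} (hl : ∀ a ∈ l, a ∈ stdGen) :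
    wordLength (evalWord l) ≤ l.length :=
  Nat.sInf_le ⟨l, rfl, hl, rfl⟩

theorem Reachable.exists_length_eq_wordLength {p : ℝ × ℝ × ℝ} (h : Reachable p) :
    ∃ l, (∀ a ∈ l, a ∈ stdGen) ∧ evalWord l = p ∧ l.length = wordLength p := by
  obtain ⟨l, hl, hev⟩ := h
  obtain ⟨l', hlen, hl', hev'⟩ := Nat.sInf_mem (⟨l.length, l, rfl, hl, hev⟩ :
    {n | ∃ l : List (ℝ × ℝ × ℝ), l.length = n ∧ (∀ a ∈ l, a ∈ stdGen) ∧ evalWord l = p}.Nonempty)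
  exact ⟨l', hl', hev', hlen⟩

theorem wordLength_eq_zero_of_not_reachable {p : ℝ × ℝ × ℝ} (h : ¬Reachable p) :
    wordLength p = 0 := by
  change sInf {n | ∃ l : List (ℝ × ℝ × ℝ), l.length = n ∧ (∀ a ∈ l, a ∈ stdGen) ∧
    evalWord l = p} = 0
  refine Nat.sInf_eq_zero.mpr (.inr (Set.eq_empty_of_forall_notMem ?_))
  rintro n ⟨l, -, hl, hev⟩
  exact h ⟨l, hl, hev⟩

theorem one_half_le_of_two_mul_eq_intCast {z : ℝ} {k : ℤ} (hk : 2 * z = k) (hz : 0 < z) :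
    1 / 2 ≤ z := by
  have hk_pos : (0 : ℤ) < k := by exact_mod_cast (show (0 : ℝ) < k by linarith)
  have hk_one : (1 : ℝ) ≤ k := by exact_mod_cast hk_pos
  linarith

theorem wordLength_mono_in_height_general (x y : ℤ)
    (z : ℝ) (hz : 0 < z) (hlat : ∃ m : ℤ, z = (m : ℝ) + (x : ℝ) * (y : ℝ) / 2) :
    wordLength ((x : ℝ), (y : ℝ), z - 1) ≤ wordLength ((x : ℝ), (y : ℝ), z) := by
  obtain ⟨m, hm⟩ := hlat
  have hz' : 1 / 2 ≤ z :=
    one_half_le_of_two_mul_eq_intCast (k := 2 * m + x * y) (by push_cast; rw [hm]; ring) hz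
  by_cases hreach : Reachable ((x : ℝ), (y : ℝ), z)
  · obtain ⟨l, hl, hev, hlen⟩ := hreach.exists_length_eq_wordLength
    obtain ⟨l', hperm, hev'⟩ := exists_perm_evalWord_eq_height_sub_one hl hev hz'
    rw [← hlen, ← hperm.length_eq, ← hev']
    exact wordLength_le_length fun a ha => hl a (hperm.subset ha)
  · have hreach' : ¬Reachable ((x : ℝ), (y : ℝ), z - 1) := fun h =>
      hreach (by simpa using h.height_add_one)
    rw [wordLength_eq_zero_of_not_reachable hreach, wordLength_eq_zero_of_not_reachable hreach']

/-- Word length is nondecreasing in the height coordinate above 0: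
    for x, y ≥ 0 and z > 0 (with (x,y,z) ∈ H(ℤ), i.e. z ∈ ℤ + xy/2),
    |(x,y,z-1)| ≤ |(x,y,z)|. -/
theorem wordLength_mono_in_height (x y : ℤ) (hx : 0 ≤ x) (hy : 0 ≤ y)
    (z : ℝ) (hz : 0 < z) (hlat : ∃ m : ℤ, z = (m : ℝ) + (x : ℝ) * (y : ℝ) / 2) :
    wordLength ((x : ℝ), (y : ℝ), z - 1) ≤ wordLength ((x : ℝ), (y : ℝ), z) :=
  wordLength_mono_in_height_general x y z hz hlat
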